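/- Let C = {c_1,…,c_m} be candidate locations, E = {e_1,…,e_n} expert locations in a normed vector space, and ≻^k an inducible top-k ranking profile. Suppose candidate g lies in the range of ≻_i^k for some expert i. Then d_G(j, g) < +∞ for every candidate j that is not reachable from g in G(C, E, ≻^k), and there exists a real number α such that the vector q̂ ∈ ℝ^m defined by q̂_j = d_G(g, j) for all j reachable from g and q̂_j = α − d_G(j, g) for all j not reachable from g is consistent with ≻^k. -/

import Mathlib

open scoped Classical

section VotingDefs

variable {V : Type*} [NormedAddCommGroup V] [NormedSpace ℝ V]

/-- An expert with top-`k` ranking `pref : Fin k → Fin m` prefers candidate `j` to `j'`: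
`j` is ranked at some position `h`, and `j'` is either unranked or ranked strictly later. -/
def Prefers {k m : ℕ} (pref : Fin k → Fin m) (j j' : Fin m) : Prop :=
  ∃ h : Fin k, pref h = j ∧
    ((∀ h' : Fin k, pref h' ≠ j') ∨ ∃ h' : Fin k, pref h' = j' ∧ h < h')

/-- `q` is consistent with the profile `pref` of top-`k` rankings, given candidate
locations `c` and expert locations `e`. -/
def Consistent {n k m : ℕ} (c : Fin m → V) (e : Fin n → V)
    (pref : Fin n → Fin k → Fin m) (q : Fin m → ℝ) : Prop :=
  ∀ (i : Fin n) (j j' : Fin m), Prefers (pref i) j j' →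
    q j' - ‖e i - c j'‖ ≤ q j - ‖e i - c j‖

/-- Edge relation of the graph `G(C, E, ≻^k)`. -/
def HasEdge {n k m : ℕ} (pref : Fin n → Fin k → Fin m) (j j' : Fin m) : Prop :=
  ∃ i : Fin n, Prefers (pref i) j j'

/-- Weight of the edge `j → j'` in `G(C, E, ≻^k)`: the minimum of
`‖e i - c j'‖ - ‖e i - c j‖` over experts `i` preferring `j` to `j'`. -/
noncomputable def weightG {n k m : ℕ} (c : Fin m → V) (e : Fin n → V)
    (pref : Fin n → Fin k → Fin m) (j j' : Fin m) : ℝ :=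
  sInf {x : ℝ | ∃ i : Fin n, Prefers (pref i) j j' ∧ x = ‖e i - c j'‖ - ‖e i - c j‖}

/-- A directed walk along `edge` from `g` to `h`, recorded as its list of vertices. -/
def IsWalk {α : Type*} (edge : α → α → Prop) (l : List α) (g h : α) : Prop :=
  l.Chain' edge ∧ l.head? = some g ∧ l.getLast? = some h

/-- Total weight of a walk (sum of the weights of consecutive pairs). -/
noncomputable def walkWeight {α : Type*} (w : α → α → ℝ) (l : List α) : ℝ :=
  ((l.zip l.tail).map fun p => w p.1 p.2).sum

/-- Shortest directed path distance; `+∞` if there is no directed path. -/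
noncomputable def distG {α : Type*} (edge : α → α → Prop) (w : α → α → ℝ) (g h : α) : EReal :=
  sInf {x : EReal | ∃ l : List α, IsWalk edge l g h ∧ x = ((walkWeight w l : ℝ) : EReal)}

/-- Distance (number of edges) in an unweighted directed graph; `⊤` if unreachable. -/
noncomputable def hopDist {α : Type*} (edge : α → α → Prop) (g h : α) : ℕ∞ :=
  sInf {x : ℕ∞ | ∃ l : List α, IsWalk edge l g h ∧ x = ((l.length - 1 : ℕ) : ℕ∞)}

/-- `diam(G, S)`: the longest shortest-path length between two vertices of `S`. -/
noncomputable def diamS {α : Type*} (edge : α → α → Prop) (S : Set α) : ℕ∞ :=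
  ⨆ (u : α) (_ : u ∈ S) (v : α) (_ : v ∈ S), hopDist edge u v

/-- Edge relation of the unweighted graph `G(C, E, ≻^k)[δ]`. -/
def EdgeDelta {n k m : ℕ} (e : Fin n → V) (pref : Fin n → Fin k → Fin m) (δ : ℝ)
    (j j' : Fin m) : Prop :=
  ∃ i i' : Fin n, Prefers (pref i) j j' ∧ Prefers (pref i') j' j ∧ ‖e i - e i'‖ ≤ δ

/-- Minimum cardinality of an internal `δ`-cover of `Θ`; `⊤` if no finite cover exists. -/
noncomputable def coverNum (Θ : Set V) (δ : ℝ) : ℕ∞ :=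
  sInf {x : ℕ∞ | ∃ X : Finset V, ↑X ⊆ Θ ∧ (∀ θ ∈ Θ, ∃ v ∈ X, ‖θ - v‖ ≤ δ) ∧ x = (X.card : ℕ∞)}

end VotingDefs

/-!
A consistent `q` is a feasible potential for `G`: every edge satisfies
`q j' - q j ≤ w(j, j')`, hence so does every walk, so `G` has no negative cycles and all
distances between mutually reachable candidates are finite. Since expert `i` ranks `g`, every
other candidate `j` is joined to `g` by an edge in one direction; if `j` is not reachable
from `g`, that edge is `j → g`. Along an edge `j → j'` the triangle inequality gives the
consistency inequality when both ends are reachable from `g` (for `d_G(g, ·)`) or both are not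
(for `d_G(·, g)`); an edge from a reachable to an unreachable candidate cannot exist, and the
finitely many edges from unreachable to reachable candidates are handled by taking `α` large.
-/

section Walks

variable {α : Type*} {E : α → α → Prop} {w : α → α → ℝ} {q : α → ℝ} {l : List α}
  {a b u v v' : α}

lemma not_isWalk_nil (E : α → α → Prop) (u v : α) : ¬ IsWalk E [] u v := by
  simp [IsWalk]

lemma isWalk_singleton_iff : IsWalk E [a] u v ↔ a = u ∧ a = v := by
  simp only [IsWalk, List.head?_cons, List.getLast?_singleton, Option.some.injEq]
  exact ⟨fun h => h.2, fun h => ⟨List.isChain_singleton a, h⟩⟩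

lemma isWalk_cons_cons_iff :
    IsWalk E (a :: b :: l) u v ↔ a = u ∧ E a b ∧ IsWalk E (b :: l) b v := by
  simp only [IsWalk, List.head?_cons, Option.some.injEq, List.getLast?_cons_cons, true_and]
  constructor
  · rintro ⟨hchain, rfl, hv⟩
    exact ⟨rfl, (List.isChain_cons_cons.1 hchain).1, (List.isChain_cons_cons.1 hchain).2, hv⟩
  · rintro ⟨rfl, hab, hchain, hv⟩
    exact ⟨List.isChain_cons_cons.2 ⟨hab, hchain⟩, rfl, hv⟩

lemma isWalk_pair (h : E a b) : IsWalk E [a, b] a b :=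
  isWalk_cons_cons_iff.2 ⟨rfl, h, isWalk_singleton_iff.2 ⟨rfl, rfl⟩⟩

lemma IsWalk.cons (h : E a b) (hl : IsWalk E l b v) : IsWalk E (a :: l) a v := by
  cases l with
  | nil => exact absurd hl (not_isWalk_nil E b v)
  | cons b' l =>
    obtain rfl : b' = b := by simpa [IsWalk] using hl.2.1
    exact isWalk_cons_cons_iff.2 ⟨rfl, h, hl⟩

lemma IsWalk.concat (hl : IsWalk E l u v) (h : E v v') : IsWalk E (l ++ [v']) u v' := by
  induction l generalizing u with
  | nil => exact absurd hl (not_isWalk_nil E u v)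
  | cons a t ih =>
    cases t with
    | nil =>
      obtain ⟨rfl, rfl⟩ := isWalk_singleton_iff.1 hl
      exact isWalk_pair h
    | cons b r =>
      obtain ⟨rfl, hab, hbr⟩ := isWalk_cons_cons_iff.1 hl
      exact (ih hbr).cons hab

lemma walkWeight_singleton (w : α → α → ℝ) (a : α) : walkWeight w [a] = 0 := rfl

lemma walkWeight_cons_cons (w : α → α → ℝ) (a b : α) (l : List α) :
    walkWeight w (a :: b :: l) = w a b + walkWeight w (b :: l) := by
  simp [walkWeight]

lemma walkWeight_cons (h : l.head? = some b) : walkWeight w (a :: l) = w a b + walkWeight w l := by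
  cases l with
  | nil => simp at h
  | cons b' l =>
    obtain rfl : b' = b := by simpa using h
    exact walkWeight_cons_cons w a b' l

lemma walkWeight_concat (h : l.getLast? = some v) :
    walkWeight w (l ++ [v']) = walkWeight w l + w v v' := by
  induction l with
  | nil => simp at h
  | cons a t ih =>
    cases t with
    | nil =>
      obtain rfl : a = v := by simpa using h
      simp [walkWeight_cons_cons, walkWeight_singleton]
    | cons b r =>
      rw [List.getLast?_cons_cons] at h
      simp only [List.cons_append] at ih ⊢
      rw [walkWeight_cons_cons, walkWeight_cons_cons, ih h, add_assoc]

lemma sub_le_walkWeight (hq : ∀ a b, E a b → q b - q a ≤ w a b)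
    (hl : IsWalk E l u v) : q v - q u ≤ walkWeight w l := by
  induction l generalizing u with
  | nil => exact absurd hl (not_isWalk_nil E u v)
  | cons a t ih =>
    cases t with
    | nil =>
      obtain ⟨rfl, rfl⟩ := isWalk_singleton_iff.1 hl
      simp [walkWeight_singleton]
    | cons b r =>
      obtain ⟨rfl, hab, hbr⟩ := isWalk_cons_cons_iff.1 hl
      rw [walkWeight_cons_cons]
      linarith [hq _ _ hab, ih hbr]

lemma distG_le_walkWeight (hl : IsWalk E l u v) : distG E w u v ≤ walkWeight w l :=
  sInf_le ⟨l, hl, rfl⟩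

lemma distG_ne_top (hl : IsWalk E l u v) : distG E w u v ≠ ⊤ :=
  ne_top_of_le_ne_top (EReal.coe_ne_top _) (distG_le_walkWeight hl)

lemma sub_le_distG (hq : ∀ a b, E a b → q b - q a ≤ w a b) :
    ((q v - q u : ℝ) : EReal) ≤ distG E w u v := by
  refine le_sInf ?_
  rintro _ ⟨l, hl, rfl⟩
  exact_mod_cast sub_le_walkWeight hq hl

lemma coe_toReal_distG (hq : ∀ a b, E a b → q b - q a ≤ w a b)
    (hl : IsWalk E l u v) : ((distG E w u v).toReal : EReal) = distG E w u v :=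
  EReal.coe_toReal (distG_ne_top hl) (ne_bot_of_le_ne_bot (EReal.coe_ne_bot _) (sub_le_distG hq))

lemma distG_le_of_forall_walk {x : EReal} {r : ℝ}
    (h : ∀ l, IsWalk E l u v → x ≤ walkWeight w l + r) : x ≤ distG E w u v + r := by
  have shift {y : EReal} : x - r ≤ y ↔ x ≤ y + r :=
    EReal.sub_le_iff_le_add (.inl (EReal.coe_ne_bot r)) (.inl (EReal.coe_ne_top r))
  refine shift.1 (le_sInf ?_)
  rintro _ ⟨l, hl, rfl⟩
  exact shift.2 (h l hl)

lemma distG_le_distG_add (hE : E v v') : distG E w u v' ≤ distG E w u v + w v v' :=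
  distG_le_of_forall_walk fun l hl => by
    rw [← EReal.coe_add, ← walkWeight_concat hl.2.2]
    exact distG_le_walkWeight (hl.concat hE)

lemma distG_le_add_distG (hE : E a b) : distG E w a v ≤ w a b + distG E w b v := by
  rw [add_comm]
  exact distG_le_of_forall_walk fun l hl => by
    rw [← EReal.coe_add, add_comm, ← walkWeight_cons hl.2.1]
    exact distG_le_walkWeight (hl.cons hE)

lemma toReal_distG_le_toReal_distG_add (hq : ∀ a b, E a b → q b - q a ≤ w a b)
    (hl : IsWalk E l u v) (hE : E v v') :
    (distG E w u v').toReal ≤ (distG E w u v).toReal + w v v' := by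
  have h := distG_le_distG_add (w := w) (u := u) hE
  rw [← coe_toReal_distG hq hl, ← coe_toReal_distG hq (hl.concat hE)] at h
  exact_mod_cast h

lemma toReal_distG_le_add_toReal_distG (hq : ∀ a b, E a b → q b - q a ≤ w a b)
    (hl : IsWalk E l b v) (hE : E a b) :
    (distG E w a v).toReal ≤ w a b + (distG E w b v).toReal := by
  have h := distG_le_add_distG (w := w) (v := v) hE
  rw [← coe_toReal_distG hq hl, ← coe_toReal_distG hq (hl.cons hE)] at h
  exact_mod_cast h

end Walks

lemma Prefers.total_of_ranked {k m : ℕ} {p : Fin k → Fin m} {h : Fin k} {j : Fin m}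
    (hj : j ≠ p h) : Prefers p (p h) j ∨ Prefers p j (p h) := by
  by_cases hranked : ∃ h', p h' = j
  · obtain ⟨h', rfl⟩ := hranked
    rcases lt_trichotomy h h' with hlt | rfl | hgt
    · exact .inl ⟨h, rfl, .inr ⟨h', rfl, hlt⟩⟩
    · exact absurd rfl hj
    · exact .inr ⟨h', rfl, .inr ⟨h, rfl, hgt⟩⟩
  · exact .inl ⟨h, rfl, .inl fun h' hh' => hranked ⟨h', hh'⟩⟩

section Ranking

variable {V : Type*} [NormedAddCommGroup V] {n k m : ℕ} {c : Fin m → V} {e : Fin n → V}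
  {pref : Fin n → Fin k → Fin m} {q : Fin m → ℝ}

lemma Consistent.sub_le_weightG (hq : Consistent c e pref q) :
    ∀ j j', HasEdge pref j j' → q j' - q j ≤ weightG c e pref j j' := by
  rintro j j' ⟨i, hi⟩
  refine le_csInf ⟨_, i, hi, rfl⟩ ?_
  rintro _ ⟨i', hi', rfl⟩
  linarith [hq i' j j' hi']

lemma Consistent.weightG_le (hq : Consistent c e pref q) {i : Fin n} {j j' : Fin m}
    (h : Prefers (pref i) j j') : weightG c e pref j j' ≤ ‖e i - c j'‖ - ‖e i - c j‖ := by
  refine csInf_le ⟨q j' - q j, ?_⟩ ⟨i, h, rfl⟩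
  rintro _ ⟨i', hi', rfl⟩
  linarith [hq i' j j' hi']

lemma hasEdge_of_not_reachable {i : Fin n} {h : Fin k} {j : Fin m}
    (hj : ¬ ∃ l, IsWalk (HasEdge pref) l (pref i h) j) : HasEdge pref j (pref i h) := by
  have hne : j ≠ pref i h := by
    rintro rfl
    exact hj ⟨_, isWalk_singleton_iff.2 ⟨rfl, rfl⟩⟩
  rcases Prefers.total_of_ranked hne with hgj | hjg
  · exact absurd ⟨_, isWalk_pair ⟨i, hgj⟩⟩ hj
  · exact ⟨i, hjg⟩

end Ranking

theorem statement3_general {V : Type*} [NormedAddCommGroup V]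
    {n k m : ℕ} (c : Fin m → V) (e : Fin n → V) (pref : Fin n → Fin k → Fin m)
    (hind : ∃ q : Fin m → ℝ, Consistent c e pref q)
    (g : Fin m) (i : Fin n) (hgi : ∃ h : Fin k, pref i h = g) :
    (∀ j : Fin m, (¬ ∃ l : List (Fin m), IsWalk (HasEdge pref) l g j) →
        distG (HasEdge pref) (weightG c e pref) j g ≠ ⊤) ∧
      ∃ α : ℝ, Consistent c e pref (fun j =>
        if ∃ l : List (Fin m), IsWalk (HasEdge pref) l g j then
          (distG (HasEdge pref) (weightG c e pref) g j).toReal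
        else α - (distG (HasEdge pref) (weightG c e pref) j g).toReal) := by
  obtain ⟨q, hq⟩ := hind
  obtain ⟨h, rfl⟩ := hgi
  have hpot := hq.sub_le_weightG
  refine ⟨fun j hj => distG_ne_top (isWalk_pair (hasEdge_of_not_reachable hj)), ?_⟩
  obtain ⟨α, hα⟩ := (Set.finite_range fun p : Fin m × Fin m =>
    (distG (HasEdge pref) (weightG c e pref) (pref i h) p.2).toReal
      + (distG (HasEdge pref) (weightG c e pref) p.1 (pref i h)).toReal
      - weightG c e pref p.1 p.2).bddAbove
  refine ⟨α, fun i' j j' hjj' => ?_⟩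
  have hE : HasEdge pref j j' := ⟨i', hjj'⟩
  have hw := hq.weightG_le hjj'
  dsimp only
  by_cases hj : ∃ l, IsWalk (HasEdge pref) l (pref i h) j
  · obtain ⟨l, hl⟩ := hj
    rw [if_pos ⟨_, hl.concat hE⟩, if_pos ⟨l, hl⟩]
    linarith [toReal_distG_le_toReal_distG_add hpot hl hE]
  · by_cases hj' : ∃ l, IsWalk (HasEdge pref) l (pref i h) j'
    · rw [if_neg hj, if_pos hj']
      linarith [hα ⟨(j, j'), rfl⟩]
    · rw [if_neg hj, if_neg hj']
      linarith [toReal_distG_le_add_toReal_distG hpot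
        (isWalk_pair (hasEdge_of_not_reachable hj')) hE]

/-- Suppose candidate `g` is ranked (appears in the range of `≻_i^k`) by
some expert `i`. Then every candidate `j` not reachable from `g` has `d_G(j, g) < +∞`, and
there is a real `α` such that setting `q̂ j = d_G(g, j)` for `j` reachable from `g` and
`q̂ j = α - d_G(j, g)` otherwise yields a vector consistent with `≻^k`. -/
theorem statement3 {V : Type*} [NormedAddCommGroup V] [NormedSpace ℝ V]
    {n k m : ℕ} (c : Fin m → V) (e : Fin n → V) (pref : Fin n → Fin k → Fin m)
    (hinj : ∀ i, Function.Injective (pref i))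
    (hind : ∃ q : Fin m → ℝ, Consistent c e pref q)
    (g : Fin m) (i : Fin n) (hgi : ∃ h : Fin k, pref i h = g) :
    (∀ j : Fin m, (¬ ∃ l : List (Fin m), IsWalk (HasEdge pref) l g j) →
        distG (HasEdge pref) (weightG c e pref) j g ≠ ⊤) ∧
      ∃ α : ℝ, Consistent c e pref (fun j =>
        if ∃ l : List (Fin m), IsWalk (HasEdge pref) l g j then
          (distG (HasEdge pref) (weightG c e pref) g j).toReal
        else α - (distG (HasEdge pref) (weightG c e pref) j g).toReal) :=
  statement3_general c e pref hind g i hgi
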